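/- For m ≥ 5, in H = K_{m,m} \ E(C_{2m}), every resolving set has cardinality at least ⌊4m/5⌋. -/

import Mathlib

/-- `W` resolves `G`: every vertex is determined by its distance vector to `W`. -/
def Resolves {V : Type*} (G : SimpleGraph V) (W : Set V) : Prop :=
  ∀ u v : V, (∀ w ∈ W, G.dist u w = G.dist v w) → u = v

/-- Metric dimension: minimum cardinality of a (finite) resolving set. -/
noncomputable def metricDim {V : Type*} (G : SimpleGraph V) : ℕ :=
  sInf {k | ∃ W : Set V, W.Finite ∧ W.ncard = k ∧ Resolves G W}
/-- `K_{m,m}` minus the Hamiltonian cycle `x₁ y₁ x₂ y₂ … x_m y_m x₁` (0-indexed: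
cycle edges are `xᵢ yᵢ` and `yᵢ x_{i+1 mod m}`). -/
def cycGraph (m : ℕ) : SimpleGraph (Fin m ⊕ Fin m) where
  Adj u v := match u, v with
    | Sum.inl i, Sum.inr j => j ≠ i ∧ (i : ℕ) ≠ ((j : ℕ) + 1) % m
    | Sum.inr j, Sum.inl i => j ≠ i ∧ (i : ℕ) ≠ ((j : ℕ) + 1) % m
    | _, _ => False
  symm := ⟨by rintro (i|i) (j|j) h <;> exact h⟩
  loopless := ⟨by rintro (i|i) h <;> exact h⟩

/-- Position `k` (taken mod `2m`) along the Hamiltonian cycle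
`x₁ y₁ x₂ y₂ …`: even positions `2i ↦ xᵢ`, odd positions `2i+1 ↦ yᵢ`. -/
def cyc (m : ℕ) [NeZero m] (k : ℕ) : Fin m ⊕ Fin m :=
  if (k % (2 * m)) % 2 = 0 then
    Sum.inl ⟨k % (2 * m) / 2, by
      have hm : 0 < m := Nat.pos_of_ne_zero (NeZero.ne m)
      have h : k % (2 * m) < 2 * m := Nat.mod_lt _ (by omega)
      exact Nat.div_lt_of_lt_mul (by omega)⟩
  else
    Sum.inr ⟨k % (2 * m) / 2, by
      have hm : 0 < m := Nat.pos_of_ne_zero (NeZero.ne m)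
      have h : k % (2 * m) < 2 * m := Nat.mod_lt _ (by omega)
      exact Nat.div_lt_of_lt_mul (by omega)⟩

/-- `W` has a gap of exactly `L` vertices starting at cycle position `s`:
the positions `s` and `s+L+1` are in `W` and the `L` positions strictly between are not. -/
def IsGap (m : ℕ) [NeZero m] (W : Set (Fin m ⊕ Fin m)) (s L : ℕ) : Prop :=
  cyc m s ∈ W ∧ cyc m (s + L + 1) ∈ W ∧ ∀ t, 1 ≤ t → t ≤ L → cyc m (s + t) ∉ W

/-!
List the vertices along the removed Hamiltonian cycle as `v, σ v, σ² v, …`. Two vertices on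
the same side are at distance 2 from every other vertex of their side, and from a vertex `w` of
the other side at distance 3 or 1 according as `w` is or is not next to them on the cycle. Hence
`σ v` and `σ³ v` are separated only by `v`, `σ v`, `σ³ v`, `σ⁴ v`, so `W` meets each such
quadruple; and the middle vertices of two runs of three consecutive vertices outside `W` are
twins when they lie on the same side, so there are at most two such runs. Every window of five
consecutive vertices then contains two vertices of `W`, unless it begins or ends with such a
run, which happens for at most four windows. Summing over the `2m` windows gives
`4m ≤ 5 |W| + 4`.
-/

open Finset SimpleGraph

lemma Bool.eq_of_ne_of_ne {a b c : Bool} (hab : a ≠ b) (hcb : c ≠ b) : a = c := by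
  revert a b c; decide

lemma exists_notMem_of_four_lt_card {α : Type*} [Fintype α] [DecidableEq α]
    (h : 4 < Fintype.card α) (a b c d : α) : ∃ k, k ∉ ({a, b, c, d} : Finset α) := by
  obtain ⟨k, -, hk⟩ :=
    exists_mem_notMem_of_card_lt_card (s := {a, b, c, d}) (t := univ) (card_le_four.trans_lt h)
  exact ⟨k, hk⟩

section CyclicWindow
variable {α : Type*} [Fintype α] [DecidableEq α] (σ : Equiv.Perm α) (S : Finset α)

def tripleGapStarts : Finset α := {v | v ∉ S ∧ σ v ∉ S ∧ (σ ^ 2) v ∉ S}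

variable {σ S}

lemma two_le_window_add_gaps (hS : ∀ v, v ∈ S ∨ σ v ∈ S ∨ (σ ^ 3) v ∈ S ∨ (σ ^ 4) v ∈ S)
    (v : α) :
    2 ≤ ∑ k ∈ range 5, (if (σ ^ k) v ∈ S then 1 else 0) +
      (if v ∈ tripleGapStarts σ S then 1 else 0) +
      (if (σ ^ 2) v ∈ tripleGapStarts σ S then 1 else 0) := by
  have hσ3 : σ ((σ ^ 2) v) = (σ ^ 3) v := by rw [← Equiv.Perm.mul_apply, ← pow_succ']
  have hσ4 : (σ ^ 2) ((σ ^ 2) v) = (σ ^ 4) v := by rw [← Equiv.Perm.mul_apply, ← pow_add]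
  simp only [tripleGapStarts, mem_filter, mem_univ, true_and, hσ3, hσ4, sum_range_succ,
    sum_range_zero, pow_zero, pow_one, Equiv.Perm.one_apply]
  have := hS v
  by_cases h0 : v ∈ S <;> by_cases h1 : σ v ∈ S <;> by_cases h2 : (σ ^ 2) v ∈ S <;>
    by_cases h3 : (σ ^ 3) v ∈ S <;> by_cases h4 : (σ ^ 4) v ∈ S <;> simp_all

theorem two_mul_card_le_of_forall_window
    (hS : ∀ v, v ∈ S ∨ σ v ∈ S ∨ (σ ^ 3) v ∈ S ∨ (σ ^ 4) v ∈ S) :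
    2 * Fintype.card α ≤ 5 * #S + 2 * #(tripleGapStarts σ S) := by
  have hshift (f : α → ℕ) (k : ℕ) : ∑ v, f ((σ ^ k) v) = ∑ v, f v := Equiv.sum_comp (σ ^ k) f
  calc 2 * Fintype.card α = ∑ _v : α, 2 := by simp [mul_comm]
    _ ≤ ∑ v, (∑ k ∈ range 5, (if (σ ^ k) v ∈ S then 1 else 0) +
          (if v ∈ tripleGapStarts σ S then 1 else 0) +
          (if (σ ^ 2) v ∈ tripleGapStarts σ S then 1 else 0)) :=
        sum_le_sum fun v _ => two_le_window_add_gaps hS v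
    _ = 5 * #S + 2 * #(tripleGapStarts σ S) := by
        rw [sum_add_distrib, sum_add_distrib, sum_comm,
          hshift (fun v => if v ∈ tripleGapStarts σ S then 1 else 0)]
        simp only [hshift (fun v => if v ∈ S then 1 else 0), sum_ite_mem, univ_inter, sum_const,
          smul_eq_mul, mul_one, card_range]
        ring

end CyclicWindow

namespace cycGraph
variable {m : ℕ} [NeZero m]

/-- The successor along the removed Hamiltonian cycle `x₀ y₀ x₁ y₁ ⋯ x_{m-1} y_{m-1} x₀`. -/
def succ (m : ℕ) [NeZero m] : Equiv.Perm (Fin m ⊕ Fin m) where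
  toFun := Sum.elim Sum.inr (fun i => Sum.inl (i + 1))
  invFun := Sum.elim (fun i => Sum.inr (i - 1)) Sum.inl
  left_inv := by rintro (i | i) <;> simp
  right_inv := by rintro (i | i) <;> simp

@[simp] lemma succ_inl (i : Fin m) : succ m (Sum.inl i) = Sum.inr i := rfl
@[simp] lemma succ_inr (i : Fin m) : succ m (Sum.inr i) = Sum.inl (i + 1) := rfl

lemma isLeft_succ (v : Fin m ⊕ Fin m) : (succ m v).isLeft = !v.isLeft := by
  rcases v with i | i <;> rfl

lemma succ_sq_apply_ne (hm : 1 < m) (v : Fin m ⊕ Fin m) : (succ m ^ 2) v ≠ v := by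
  rcases v with i | i <;> simp [sq] <;> omega

lemma adj_iff {u w : Fin m ⊕ Fin m} :
    (cycGraph m).Adj u w ↔ u.isLeft ≠ w.isLeft ∧ w ≠ succ m u ∧ u ≠ succ m w := by
  have hval (i j : Fin m) : (i : ℕ) ≠ ((j : ℕ) + 1) % m ↔ i ≠ j + 1 := by
    simp only [Ne, Fin.ext_iff, Fin.val_add, Fin.val_one', Nat.add_mod_mod]
  rcases u with i | i <;> rcases w with j | j <;>
    simp [cycGraph, hval, eq_comm, and_comm]

lemma exists_adj_adj (hm : 5 ≤ m) {u w : Fin m ⊕ Fin m} (h : u.isLeft = w.isLeft) :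
    ∃ z, (cycGraph m).Adj u z ∧ (cycGraph m).Adj z w := by
  have hcard : 4 < Fintype.card (Fin m) := by rw [Fintype.card_fin]; omega
  rcases u with i | i <;> rcases w with j | j <;> simp only [Sum.isLeft_inl, Sum.isLeft_inr,
    Bool.true_eq_false, Bool.false_eq_true] at h
  · obtain ⟨k, hk⟩ := exists_notMem_of_four_lt_card hcard i (i - 1) j (j - 1)
    simp only [mem_insert, mem_singleton, not_or] at hk
    refine ⟨Sum.inr k, adj_iff.mpr ?_, adj_iff.mpr ?_⟩ <;>
      grind [succ_inl, succ_inr]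
  · obtain ⟨k, hk⟩ := exists_notMem_of_four_lt_card hcard i (i + 1) j (j + 1)
    simp only [mem_insert, mem_singleton, not_or] at hk
    refine ⟨Sum.inl k, adj_iff.mpr ?_, adj_iff.mpr ?_⟩ <;>
      grind [succ_inl, succ_inr]

lemma dist_eq_two_of_isLeft_eq (hm : 5 ≤ m) {u w : Fin m ⊕ Fin m} (hne : u ≠ w)
    (h : u.isLeft = w.isLeft) : (cycGraph m).dist u w = 2 := by
  obtain ⟨z, huz, hzw⟩ := exists_adj_adj hm h
  have hna : ¬(cycGraph m).Adj u w := fun hadj => (adj_iff.mp hadj).1 h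
  have : (cycGraph m).edist u w = 2 :=
    edist_eq_two_iff.mpr ⟨hne, hna, z, (cycGraph m).mem_commonNeighbors.mpr ⟨huz, hzw.symm⟩⟩
  simp [SimpleGraph.dist, this]

lemma dist_eq_three_of_not_adj (hm : 5 ≤ m) {u w : Fin m ⊕ Fin m} (h : u.isLeft ≠ w.isLeft)
    (hna : ¬(cycGraph m).Adj u w) : (cycGraph m).dist u w = 3 := by
  obtain ⟨z, huz, -⟩ := exists_adj_adj hm (rfl : u.isLeft = u.isLeft)
  obtain ⟨z', hzz', hz'w⟩ :=
    exists_adj_adj hm (Bool.eq_of_ne_of_ne (adj_iff.mp huz).1.symm h.symm)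
  let p : (cycGraph m).Walk u w := .cons huz (.cons hzz' (.cons hz'w .nil))
  have hle : (cycGraph m).dist u w ≤ 3 := dist_le p
  have hlt : 2 < (cycGraph m).edist u w := by
    refine two_lt_edist_iff.mpr ⟨fun he => h (he ▸ rfl), hna, ?_⟩
    refine Set.eq_empty_of_forall_notMem fun x hx => h ?_
    rw [mem_commonNeighbors] at hx
    exact Bool.eq_of_ne_of_ne (adj_iff.mp hx.1).1 (adj_iff.mp hx.2).1
  rw [← p.reachable.coe_dist_eq_edist] at hlt
  norm_cast at hlt
  omega

lemma dist_eq (hm : 5 ≤ m) {u w : Fin m ⊕ Fin m} (h : u ≠ w) :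
    (cycGraph m).dist u w =
      if u.isLeft = w.isLeft then 2 else if w = succ m u ∨ u = succ m w then 3 else 1 := by
  split_ifs with hs hc
  · exact dist_eq_two_of_isLeft_eq hm h hs
  · exact dist_eq_three_of_not_adj hm hs fun hadj => by have := adj_iff.mp hadj; tauto
  · exact dist_eq_one_iff_adj.mpr (adj_iff.mpr (by tauto))

lemma dist_eq_dist (hm : 5 ≤ m) {u u' w : Fin m ⊕ Fin m} (hs : u.isLeft = u'.isLeft)
    (hu : u ≠ w) (hu' : u' ≠ w)
    (hc : (w = succ m u ∨ u = succ m w) ↔ (w = succ m u' ∨ u' = succ m w)) :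
    (cycGraph m).dist u w = (cycGraph m).dist u' w := by
  rw [dist_eq hm hu, dist_eq hm hu', hs]
  simp only [hc]

variable {S : Finset (Fin m ⊕ Fin m)}

lemma mem_window_of_resolves (hm : 5 ≤ m) (hS : Resolves (cycGraph m) S) (v : Fin m ⊕ Fin m) :
    v ∈ S ∨ succ m v ∈ S ∨ (succ m ^ 3) v ∈ S ∨ (succ m ^ 4) v ∈ S := by
  by_contra! h
  obtain ⟨h0, h1, h3, h4⟩ := h
  have hne : (succ m ^ 2) (succ m v) ≠ succ m v := succ_sq_apply_ne (by omega) _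
  refine hne (hS _ _ fun x hx => (dist_eq_dist hm ?_ ?_ ?_ ?_).symm)
  all_goals simp only [pow_succ, pow_zero, one_mul, Equiv.Perm.mul_apply] at *
  · simp [isLeft_succ]
  · rintro rfl; exact h1 hx
  · rintro rfl; exact h3 hx
  · simp only [(succ m).apply_eq_iff_eq]
    constructor <;> rintro (rfl | rfl) <;> simp_all

lemma eq_of_mem_tripleGapStarts (hm : 5 ≤ m) (hS : Resolves (cycGraph m) S)
    {v w : Fin m ⊕ Fin m} (hv : v ∈ tripleGapStarts (succ m) S)
    (hw : w ∈ tripleGapStarts (succ m) S) (hs : v.isLeft = w.isLeft) : v = w := by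
  simp only [tripleGapStarts, mem_filter, mem_univ, true_and, sq, Equiv.Perm.mul_apply] at hv hw
  refine (succ m).injective (hS _ _ fun x hx => dist_eq_dist hm ?_ ?_ ?_ ?_)
  · simp [isLeft_succ, hs]
  · rintro rfl; exact hv.2.1 hx
  · rintro rfl; exact hw.2.1 hx
  · simp only [(succ m).apply_eq_iff_eq]
    constructor <;> rintro (rfl | rfl) <;> simp_all

lemma card_tripleGapStarts_le_two (hm : 5 ≤ m) (hS : Resolves (cycGraph m) S) :
    #(tripleGapStarts (succ m) S) ≤ 2 :=
  calc #(tripleGapStarts (succ m) S) ≤ #(univ : Finset Bool) :=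
        card_le_card_of_injOn Sum.isLeft (fun _ _ => mem_coe.2 (mem_univ _)) fun _ hv _ hw hs =>
          eq_of_mem_tripleGapStarts hm hS hv hw hs
    _ = 2 := rfl

end cycGraph

/-- for `m ≥ 5`, every resolving set of `K_{m,m} \ E(C_{2m})`
has at least `⌊4m/5⌋` vertices. -/
theorem stmt5 (m : ℕ) (hm : 5 ≤ m) (W : Set (Fin m ⊕ Fin m))
    (hW : Resolves (cycGraph m) W) : 4 * m / 5 ≤ W.ncard := by
  have : NeZero m := ⟨by omega⟩
  obtain ⟨S, rfl⟩ := (Set.toFinite W).exists_finset_coe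
  have hwindow := two_mul_card_le_of_forall_window (cycGraph.mem_window_of_resolves hm hW)
  have hgaps := cycGraph.card_tripleGapStarts_le_two hm hW
  rw [Fintype.card_sum, Fintype.card_fin] at hwindow
  rw [Set.ncard_coe_finset]
  omega
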